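/- Let n be a positive integer and let M₁ be a perfect matching of the balanced papillon graph P_n with |M₁ ∩ X| = 2, where X is the principal 4-edge-cut of P_n. Then there exists a perfect matching M₂ of P_n such that |M₂ ∩ X| = 2 and M₁ ∩ M₂ = ∅. -/

import Mathlib

open SimpleGraph

/-- Vertices of the papillon graph `P_{r,ℓ}`: `(false, i)` is the outer vertex `u_i`
and `(true, i)` is the inner vertex `v_i`, where indices are taken in `ZMod (2(r+ℓ))`
(so the 1-based index `i ∈ {1, …, 2(r+ℓ)}` corresponds to `i mod 2(r+ℓ)`). -/
abbrev PapVert (N : ℕ) : Type := Bool × ZMod N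

/-- The outer vertex `u_i` (1-based index `i`). -/
def pu (N : ℕ) (i : ℕ) : PapVert N := (false, (i : ZMod N))

/-- The inner vertex `v_i` (1-based index `i`). -/
def pv (N : ℕ) (i : ℕ) : PapVert N := (true, (i : ZMod N))

/-- The edge set of the papillon graph `P_{r,ℓ}`: the outer-cycle edges, the spokes,
and the inner-cycle edges. -/
def papillonEdges (r l : ℕ) : Set (Sym2 (PapVert (2 * (r + l)))) :=
  {e | (∃ i, 1 ≤ i ∧ i ≤ 2 * (r + l) - 1 ∧
          e = s(pu (2 * (r + l)) i, pu (2 * (r + l)) (i + 1)))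
      ∨ e = s(pu (2 * (r + l)) (2 * (r + l)), pu (2 * (r + l)) 1)
      ∨ (∃ i, 1 ≤ i ∧ i ≤ 2 * (r + l) ∧
          e = s(pu (2 * (r + l)) i, pv (2 * (r + l)) i))
      ∨ (∃ i, 1 ≤ i ∧ i ≤ r + l ∧
          e = s(pv (2 * (r + l)) (2 * i - 1), pv (2 * (r + l)) (2 * i)))
      ∨ (∃ i, 1 ≤ i ∧ i ≤ r + l - 1 ∧ i ≠ min r l ∧
          e = s(pv (2 * (r + l)) (2 * i - 1), pv (2 * (r + l)) (2 * i + 2)))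
      ∨ e = s(pv (2 * (r + l)) 2, pv (2 * (r + l)) (2 * min r l + 2))
      ∨ e = s(pv (2 * (r + l)) (2 * min r l - 1), pv (2 * (r + l)) (2 * (r + l) - 1))}

/-- The papillon graph `P_{r,ℓ}`. -/
def papillon (r l : ℕ) : SimpleGraph (PapVert (2 * (r + l))) :=
  SimpleGraph.fromEdgeSet (papillonEdges r l)

/-- `M` is a perfect matching of `G`, viewed as a set of edges: every vertex lies on
exactly one edge of `M`. -/
def IsPerfMatching {V : Type*} (G : SimpleGraph V) (M : Set (Sym2 V)) : Prop :=
  M ⊆ G.edgeSet ∧ ∀ v : V, ∃! e, e ∈ M ∧ v ∈ e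

/-- `F` is (the edge set of) a 2-factor of `G`: a spanning subgraph in which every
vertex is incident with exactly two edges of `F`. -/
def Is2Factor {V : Type*} (G : SimpleGraph V) (F : Set (Sym2 V)) : Prop :=
  F ⊆ G.edgeSet ∧ ∀ v : V, ∃ e₁ e₂, e₁ ≠ e₂ ∧ e₁ ∈ F ∧ e₂ ∈ F ∧ v ∈ e₁ ∧ v ∈ e₂ ∧
    ∀ e ∈ F, v ∈ e → e = e₁ ∨ e = e₂

/-- Every cycle of `G` all of whose edges lie in `F` has even length. -/
def HasOnlyEvenCycles {V : Type*} (G : SimpleGraph V) (F : Set (Sym2 V)) : Prop :=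
  ∀ (x : V) (c : G.Walk x x), c.IsCycle → (∀ e ∈ c.edges, e ∈ F) → Even c.length

/-- `G` is even-2-factorable: every 2-factor of `G` contains only even cycles. -/
def IsE2F {V : Type*} (G : SimpleGraph V) : Prop :=
  ∀ F, Is2Factor G F → HasOnlyEvenCycles G F

/-- `S` is the edge set of a Hamiltonian cycle of `G`. -/
def IsHamCycleSet {V : Type*} [DecidableEq V] (G : SimpleGraph V) (S : Set (Sym2 V)) : Prop :=
  ∃ (x : V) (c : G.Walk x x), c.IsHamiltonianCycle ∧ S = {e | e ∈ c.edges}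

/-- `G` has the Perfect-Matching-Hamiltonian property. -/
def HasPMH {V : Type*} [DecidableEq V] (G : SimpleGraph V) : Prop :=
  ∀ M, IsPerfMatching G M → ∃ N, IsPerfMatching G N ∧ IsHamCycleSet G (M ∪ N)

/-- The principal 4-edge-cut `X = {a, b, c, d}` of the balanced papillon graph `P_n`,
where `a = u₁u_{4n}`, `b = v_{2n-1}v_{4n-1}`, `c = v₂v_{2n+2}`, `d = u_{2n}u_{2n+1}`. -/
def Xcut (n : ℕ) : Set (Sym2 (PapVert (2 * (n + n)))) :=
  {s(pu (2 * (n + n)) 1, pu (2 * (n + n)) (4 * n)),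
   s(pv (2 * (n + n)) (2 * n - 1), pv (2 * (n + n)) (4 * n - 1)),
   s(pv (2 * (n + n)) 2, pv (2 * (n + n)) (2 * n + 2)),
   s(pu (2 * (n + n)) (2 * n), pu (2 * (n + n)) (2 * n + 1))}

/-- The vertex set `{u_{2j-1}, u_{2j}, v_{2j-1}, v_{2j}}` of the 4-pole `T_j` of `P_n`. -/
def Tverts (n j : ℕ) : Set (PapVert (2 * (n + n))) :=
  {pu (2 * (n + n)) (2 * j - 1), pu (2 * (n + n)) (2 * j),
   pv (2 * (n + n)) (2 * j - 1), pv (2 * (n + n)) (2 * j)}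

/-- `∂T_j`: the set of edges of `P_n` with exactly one endpoint in
`{u_{2j-1}, u_{2j}, v_{2j-1}, v_{2j}}`. -/
def boundaryT (n j : ℕ) : Set (Sym2 (PapVert (2 * (n + n)))) :=
  {e | e ∈ (papillon n n).edgeSet ∧ ∃ x y, e = s(x, y) ∧ x ∈ Tverts n j ∧ y ∉ Tverts n j}

/-!
The edges of `P_n` split into three perfect matchings: the spokes `u_i v_i`, the edges
`u_{2j-1} u_{2j}`, `v_{2j-1} v_{2j}` inside the 4-poles `T_j`, and the remaining "link" edges,
which contain the cut `X`. Spokes and pole edges form the squares `T_j`. Given a perfect matching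
`M₁`, keep every link edge not in `M₁`. In each square the vertices left uncovered are those whose
link edge is in `M₁`; there are none, all four, or two adjacent ones, and they can be matched inside
the square avoiding `M₁` (by spokes if `M₁` contains the opposite spoke, by pole edges otherwise).
This gives a perfect matching `M₂` disjoint from `M₁` with `M₂ ∩ X = X \ M₁`, of size `4 - 2 = 2`.
-/

open Function

section SquareDecomposition

variable {V : Type*} {G : SimpleGraph V}

theorem IsPerfMatching.exists_mate {M : Set (Sym2 V)} (hM : IsPerfMatching G M) :
    ∃ m : V → V, Involutive m ∧ (∀ x, G.Adj x (m x)) ∧ ∀ x y, s(x, y) ∈ M ↔ y = m x := by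
  choose e he huniq using fun x => hM.2 x
  have hmem (x y : V) : s(x, y) ∈ M ↔ y = Sym2.Mem.other (he x).2 := by
    rw [← Sym2.congr_right (a := x), Sym2.other_spec]
    exact ⟨fun h => huniq x _ ⟨h, Sym2.mem_mk_left x y⟩, fun h => h ▸ (he x).1⟩
  refine ⟨fun x => Sym2.Mem.other (he x).2, fun x => ?_, fun x => ?_, hmem⟩
  · exact ((hmem _ x).1 (Sym2.eq_swap ▸ (hmem x _).2 rfl)).symm
  · exact G.mem_edgeSet.1 (hM.1 ((hmem x _).2 rfl))

theorem isPerfMatching_range {f : V → V} (hf : Involutive f) (hadj : ∀ x, G.Adj x (f x)) :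
    IsPerfMatching G (Set.range fun x => s(x, f x)) := by
  refine ⟨Set.range_subset_iff.2 hadj, fun v => ⟨s(v, f v), ⟨⟨v, rfl⟩, Sym2.mem_mk_left v _⟩, ?_⟩⟩
  rintro _ ⟨⟨x, rfl⟩, hv⟩
  rcases Sym2.mem_iff.1 hv with rfl | rfl
  · rfl
  · rw [hf, Sym2.eq_swap]

theorem Function.Involutive.eq_apply_of_mk_eq {f : V → V} (hf : Involutive f) {x y z : V}
    (h : s(x, y) = s(z, f z)) : y = f x := by
  rcases Sym2.eq_iff.1 h with ⟨rfl, rfl⟩ | ⟨rfl, rfl⟩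
  exacts [rfl, (hf y).symm]

/-- The `σ`- and `ι`-edges form disjoint squares `x, σ x, σ (ι x), ι x`, joined by the `β`-edges. -/
structure IsSquareDecomposition (G : SimpleGraph V) (σ ι β : V → V) : Prop where
  adj_iff : ∀ x y, G.Adj x y ↔ y = σ x ∨ y = ι x ∨ y = β x
  involutive_σ : Involutive σ
  involutive_ι : Involutive ι
  involutive_β : Involutive β
  comm : ∀ x, σ (ι x) = ι (σ x)
  σ_ne_ι : ∀ x, σ x ≠ ι x
  σ_ne_β : ∀ x, σ x ≠ β x
  ι_ne_β : ∀ x, ι x ≠ β x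

def avoidingMate [DecidableEq V] (σ ι β m : V → V) (x : V) : V :=
  if m x = β x then (if m (ι x) = σ (ι x) then σ x else ι x) else β x

section avoidingMate

variable [DecidableEq V] {σ ι β m : V → V} {x : V}

theorem avoidingMate_of_ne (h : m x ≠ β x) : avoidingMate σ ι β m x = β x := if_neg h

theorem avoidingMate_of_square (h : m x = β x) (hsq : m (ι x) = σ (ι x)) :
    avoidingMate σ ι β m x = σ x := by
  rw [avoidingMate, if_pos h, if_pos hsq]

theorem avoidingMate_of_not_square (h : m x = β x) (hsq : m (ι x) ≠ σ (ι x)) :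
    avoidingMate σ ι β m x = ι x := by
  rw [avoidingMate, if_pos h, if_neg hsq]

end avoidingMate

namespace IsSquareDecomposition

variable {σ ι β : V → V} (hG : IsSquareDecomposition G σ ι β)
include hG

theorem eq_or_eq_or_eq_of_adj {x y : V} (h : G.Adj x y) : y = σ x ∨ y = ι x ∨ y = β x :=
  (hG.adj_iff x y).1 h

variable [DecidableEq V] (m : V → V)

theorem adj_avoidingMate (x : V) : G.Adj x (avoidingMate σ ι β m x) := by
  rw [hG.adj_iff]
  unfold avoidingMate
  split_ifs <;> simp

theorem avoidingMate_ne (x : V) : avoidingMate σ ι β m x ≠ m x := by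
  unfold avoidingMate
  split_ifs with hβ
  · exact fun h => hG.σ_ne_β x (h.trans hβ)
  · exact fun h => hG.ι_ne_β x (h.trans hβ)
  · exact fun h => hβ h.symm

variable {m} (hm : Involutive m) (hadj : ∀ x, G.Adj x (m x))
include hm hadj

theorem involutive_avoidingMate : Involutive (avoidingMate σ ι β m) := by
  intro x
  have hσ := hG.involutive_σ
  have hι := hG.involutive_ι
  by_cases hβ : m x = β x
  · by_cases hsq : m (ι x) = σ (ι x)
    · have hσx : m (σ x) = β (σ x) := by
        rcases hG.eq_or_eq_or_eq_of_adj (hadj (σ x)) with h | h | h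
        · rw [hσ] at h
          exact absurd ((hm.eq_iff.1 h).trans hβ) (hG.σ_ne_β x)
        · rw [← hG.comm, ← hsq] at h
          exact absurd (hm.injective h) (hG.σ_ne_ι x)
        · exact h
      have hsq' : m (ι (σ x)) = σ (ι (σ x)) := by
        rw [← hG.comm, hσ, ← hsq, hm]
      rw [avoidingMate_of_square hβ hsq, avoidingMate_of_square hσx hsq', hσ]
    · have hιx : m (ι x) = β (ι x) := by
        rcases hG.eq_or_eq_or_eq_of_adj (hadj (ι x)) with h | h | h
        · exact absurd h hsq
        · rw [hι] at h
          exact absurd ((hm.eq_iff.1 h).trans hβ) (hG.ι_ne_β x)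
        · exact h
      have hsq' : m (ι (ι x)) ≠ σ (ι (ι x)) := by
        rw [hι, hβ]
        exact (hG.σ_ne_β x).symm
      rw [avoidingMate_of_not_square hβ hsq, avoidingMate_of_not_square hιx hsq', hι]
  · have hβx : m (β x) ≠ β (β x) := by
      rw [hG.involutive_β]
      exact fun h => hβ (hm.eq_iff.1 h).symm
    rw [avoidingMate_of_ne hβ, avoidingMate_of_ne hβx, hG.involutive_β]

end IsSquareDecomposition

variable {σ ι β : V → V}

theorem IsSquareDecomposition.exists_disjoint_perfMatching (hG : IsSquareDecomposition G σ ι β)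
    {M₁ : Set (Sym2 V)} (hM₁ : IsPerfMatching G M₁) :
    ∃ M₂, IsPerfMatching G M₂ ∧ Disjoint M₁ M₂ ∧ ∀ x, s(x, β x) ∉ M₁ → s(x, β x) ∈ M₂ := by
  classical
  obtain ⟨m, hm, hadj, hmem⟩ := hM₁.exists_mate
  refine ⟨_, isPerfMatching_range (hG.involutive_avoidingMate hm hadj)
    (hG.adj_avoidingMate m), ?_, fun x hx => ⟨x, ?_⟩⟩
  · rw [Set.disjoint_right]
    rintro _ ⟨x, rfl⟩ h
    exact hG.avoidingMate_ne m x ((hmem x _).1 h)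
  · exact congrArg _ (avoidingMate_of_ne fun h => hx ((hmem x _).2 h.symm))

end SquareDecomposition

namespace ZMod

def posRep {N : ℕ} (k : ZMod N) : ℕ := if k.val = 0 then N else k.val

variable {N : ℕ} [NeZero N]

@[simp]
theorem natCast_posRep (k : ZMod N) : ((k.posRep : ℕ) : ZMod N) = k := by
  unfold posRep
  split_ifs with h
  · rw [natCast_self, ((val_eq_zero k).1 h)]
  · exact natCast_zmod_val k

theorem posRep_natCast {i : ℕ} (h₁ : 1 ≤ i) (h₂ : i ≤ N) : (i : ZMod N).posRep = i := by
  unfold posRep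
  rcases h₂.lt_or_eq with h | rfl
  · rw [val_cast_of_lt h, if_neg (by omega)]
  · rw [natCast_self, val_zero, if_pos rfl]

theorem one_le_posRep (k : ZMod N) : 1 ≤ k.posRep := by
  unfold posRep
  split_ifs <;> have := NeZero.pos N <;> omega

theorem posRep_le (k : ZMod N) : k.posRep ≤ N := by
  unfold posRep
  split_ifs <;> have := val_lt k <;> omega

theorem natCast_inj_of_mem_Icc {i j : ℕ} (hi₁ : 1 ≤ i) (hi₂ : i ≤ N) (hj₁ : 1 ≤ j) (hj₂ : j ≤ N) :
    (i : ZMod N) = j ↔ i = j := by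
  refine ⟨fun h => ?_, congrArg _⟩
  rw [← posRep_natCast hi₁ hi₂, h, posRep_natCast hj₁ hj₂]

end ZMod

namespace Papillon

open ZMod

def IsPairing (N : ℕ) (g : ℕ → ℕ) : Prop :=
  ∀ i, 1 ≤ i → i ≤ N → (1 ≤ g i ∧ g i ≤ N) ∧ g (g i) = i ∧ g i ≠ i

/- `pairIdx` pairs the indices `2j-1, 2j` of the pole `T_j`; `linkIdx n false` and `linkIdx n true`
follow the remaining edges of the outer and of the inner cycle of `P_n`, the latter being the edges
`v_{2i-1} v_{2i+2}` and the two exceptional edges `b` and `c` of the cut. -/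
def pairIdx (i : ℕ) : ℕ := if i % 2 = 1 then i + 1 else i - 1

def outerLinkIdx (N i : ℕ) : ℕ :=
  if i % 2 = 1 then (if i = 1 then N else i - 1) else (if i = N then 1 else i + 1)

def innerLinkIdx (n i : ℕ) : ℕ :=
  if i % 2 = 1 then
    (if i = 2 * n - 1 then 4 * n - 1 else if i = 4 * n - 1 then 2 * n - 1 else i + 3)
  else (if i = 2 then 2 * n + 2 else if i = 2 * n + 2 then 2 else i - 3)

def linkIdx (n : ℕ) : Bool → ℕ → ℕ
  | false => outerLinkIdx (2 * (n + n))
  | true => innerLinkIdx n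

theorem isPairing_pairIdx (k : ℕ) : IsPairing (2 * k) pairIdx := by
  intro i h₁ h₂
  unfold pairIdx
  split_ifs <;> omega

theorem isPairing_linkIdx (n : ℕ) (b : Bool) : IsPairing (2 * (n + n)) (linkIdx n b) := by
  intro i h₁ h₂
  cases b <;> simp only [linkIdx, outerLinkIdx, innerLinkIdx] <;> grind

theorem pairIdx_ne_linkIdx {n i : ℕ} (hn : 1 ≤ n) (b : Bool) (h₁ : 1 ≤ i) (h₂ : i ≤ 2 * (n + n)) :
    pairIdx i ≠ linkIdx n b i := by
  cases b <;> simp only [pairIdx, linkIdx, outerLinkIdx, innerLinkIdx] <;> split_ifs <;> omega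

section Vertices

variable {N : ℕ}

-- Vertex maps act on the paper's 1-based indices: `g b` on those of the outer (`b = false`) or
-- inner (`b = true`) cycle.
def onIdx (g : Bool → ℕ → ℕ) (x : PapVert N) : PapVert N :=
  (x.1, (g x.1 (posRep x.2) : ZMod N))

def spoke (x : PapVert N) : PapVert N := (!x.1, x.2)

def twin : PapVert N → PapVert N := onIdx fun _ => pairIdx

def link (n : ℕ) : PapVert (2 * (n + n)) → PapVert (2 * (n + n)) := onIdx (linkIdx n)

theorem involutive_spoke : Involutive (spoke (N := N)) := by
  intro x
  simp [spoke]

theorem spoke_ne_self (x : PapVert N) : spoke x ≠ x := by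
  simp [spoke, Prod.ext_iff]

theorem spoke_twin (x : PapVert N) : spoke (twin x) = twin (spoke x) := rfl

theorem spoke_ne_onIdx (g : Bool → ℕ → ℕ) (x : PapVert N) : spoke x ≠ onIdx g x := by
  intro h
  simpa [spoke, onIdx] using congrArg Prod.fst h

variable [NeZero N]

theorem induction_on {P : PapVert N → Prop} (hu : ∀ i, 1 ≤ i → i ≤ N → P (pu N i))
    (hv : ∀ i, 1 ≤ i → i ≤ N → P (pv N i)) (x : PapVert N) : P x := by
  obtain ⟨b, k⟩ := x
  rw [← natCast_posRep k]
  cases b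
  exacts [hu _ (one_le_posRep k) (posRep_le k), hv _ (one_le_posRep k) (posRep_le k)]

theorem onIdx_mk (g : Bool → ℕ → ℕ) (b : Bool) {i : ℕ} (h₁ : 1 ≤ i) (h₂ : i ≤ N) :
    onIdx g (b, (i : ZMod N)) = (b, (g b i : ZMod N)) := by
  rw [onIdx, posRep_natCast h₁ h₂]

theorem involutive_onIdx {g : Bool → ℕ → ℕ} (hg : ∀ b, IsPairing N (g b)) :
    Involutive (onIdx (N := N) g) := by
  rintro ⟨b, k⟩
  obtain ⟨⟨h₁, h₂⟩, hgg, -⟩ := hg b _ (one_le_posRep k) (posRep_le k)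
  rw [show onIdx g (b, k) = (b, (g b (posRep k) : ZMod N)) from rfl, onIdx_mk g b h₁ h₂, hgg,
    natCast_posRep]

theorem onIdx_ne_onIdx {g g' : Bool → ℕ → ℕ} (hg : ∀ b, IsPairing N (g b))
    (hg' : ∀ b, IsPairing N (g' b)) (hne : ∀ b i, 1 ≤ i → i ≤ N → g b i ≠ g' b i)
    (x : PapVert N) : onIdx g x ≠ onIdx g' x := by
  obtain ⟨b, k⟩ := x
  have h₁ := one_le_posRep k
  have h₂ := posRep_le k
  obtain ⟨⟨h₃, h₄⟩, -⟩ := hg b _ h₁ h₂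
  obtain ⟨⟨h₅, h₆⟩, -⟩ := hg' b _ h₁ h₂
  simp only [onIdx, ne_eq, Prod.mk.injEq, true_and, natCast_inj_of_mem_Icc h₃ h₄ h₅ h₆]
  exact hne b _ h₁ h₂

theorem onIdx_ne_self {g : Bool → ℕ → ℕ} (hg : ∀ b, IsPairing N (g b)) (x : PapVert N) :
    onIdx g x ≠ x := by
  obtain ⟨b, k⟩ := x
  obtain ⟨⟨h₁, h₂⟩, -, hne⟩ := hg b _ (one_le_posRep k) (posRep_le k)
  rw [ne_eq, onIdx, Prod.mk.injEq, not_and]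
  intro _ h
  conv_rhs at h => rw [← natCast_posRep k]
  exact hne ((natCast_inj_of_mem_Icc h₁ h₂ (one_le_posRep k) (posRep_le k)).1 h)

end Vertices

theorem pu_pair_congr {N a b c d : ℕ} (hac : a = c) (hbd : b = d) :
    s(pu N a, pu N b) = s(pu N c, pu N d) := hac ▸ hbd ▸ rfl

theorem pv_pair_congr {N a b c d : ℕ} (hac : a = c) (hbd : b = d) :
    s(pv N a, pv N b) = s(pv N c, pv N d) := hac ▸ hbd ▸ rfl

variable {n : ℕ} [NeZero n]

theorem twin_pu {i : ℕ} (h₁ : 1 ≤ i) (h₂ : i ≤ 2 * (n + n)) :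
    twin (pu (2 * (n + n)) i) = pu (2 * (n + n)) (pairIdx i) :=
  onIdx_mk _ false h₁ h₂

theorem twin_pv {i : ℕ} (h₁ : 1 ≤ i) (h₂ : i ≤ 2 * (n + n)) :
    twin (pv (2 * (n + n)) i) = pv (2 * (n + n)) (pairIdx i) :=
  onIdx_mk _ true h₁ h₂

theorem link_pu {i : ℕ} (h₁ : 1 ≤ i) (h₂ : i ≤ 2 * (n + n)) :
    link n (pu (2 * (n + n)) i) = pu (2 * (n + n)) (outerLinkIdx (2 * (n + n)) i) :=
  onIdx_mk _ false h₁ h₂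

theorem link_pv {i : ℕ} (h₁ : 1 ≤ i) (h₂ : i ≤ 2 * (n + n)) :
    link n (pv (2 * (n + n)) i) = pv (2 * (n + n)) (innerLinkIdx n i) :=
  onIdx_mk _ true h₁ h₂

theorem involutive_twin : Involutive (twin (N := 2 * (n + n))) :=
  involutive_onIdx fun _ => isPairing_pairIdx _

theorem involutive_link : Involutive (link n) :=
  involutive_onIdx (isPairing_linkIdx n)

theorem twin_ne_link (x : PapVert (2 * (n + n))) : twin x ≠ link n x :=
  onIdx_ne_onIdx (fun _ => isPairing_pairIdx _) (isPairing_linkIdx n)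
    (fun b _ h₁ h₂ => pairIdx_ne_linkIdx NeZero.one_le b h₁ h₂) x

theorem spoke_mem_papillonEdges (x : PapVert (2 * (n + n))) :
    s(x, spoke x) ∈ papillonEdges n n := by
  induction x using induction_on with
  | hu i h₁ h₂ => exact Or.inr <| Or.inr <| Or.inl ⟨i, h₁, h₂, rfl⟩
  | hv i h₁ h₂ => exact Or.inr <| Or.inr <| Or.inl ⟨i, h₁, h₂, Sym2.eq_swap⟩

theorem twin_mem_papillonEdges (x : PapVert (2 * (n + n))) :
    s(x, twin x) ∈ papillonEdges n n := by
  induction x using induction_on with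
  | hu i h₁ h₂ =>
    rw [twin_pu h₁ h₂, pairIdx]
    split_ifs
    · exact Or.inl ⟨i, h₁, by omega, rfl⟩
    · exact Or.inl ⟨i - 1, by omega, by omega, Sym2.eq_swap.trans (pu_pair_congr rfl (by omega))⟩
  | hv i h₁ h₂ =>
    rw [twin_pv h₁ h₂, pairIdx]
    split_ifs
    · refine Or.inr <| Or.inr <| Or.inr <| Or.inl ⟨(i + 1) / 2, by omega, by omega, ?_⟩
      exact pv_pair_congr (by omega) (by omega)
    · refine Or.inr <| Or.inr <| Or.inr <| Or.inl ⟨i / 2, by omega, by omega, ?_⟩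
      exact Sym2.eq_swap.trans (pv_pair_congr (by omega) (by omega))

theorem link_mem_papillonEdges (x : PapVert (2 * (n + n))) :
    s(x, link n x) ∈ papillonEdges n n := by
  have hn : 1 ≤ n := NeZero.one_le
  simp only [papillonEdges, Nat.min_self]
  induction x using induction_on with
  | hu i h₁ h₂ =>
    rw [link_pu h₁ h₂, outerLinkIdx]
    split_ifs
    · subst i
      exact Or.inr <| Or.inl Sym2.eq_swap
    · exact Or.inl ⟨i - 1, by omega, by omega, Sym2.eq_swap.trans (pu_pair_congr rfl (by omega))⟩
    · subst i
      exact Or.inr <| Or.inl rfl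
    · exact Or.inl ⟨i, h₁, by omega, rfl⟩
  | hv i h₁ h₂ =>
    rw [link_pv h₁ h₂, innerLinkIdx]
    split_ifs
    · refine Or.inr <| Or.inr <| Or.inr <| Or.inr <| Or.inr <| Or.inr ?_
      exact pv_pair_congr (by omega) (by omega)
    · refine Or.inr <| Or.inr <| Or.inr <| Or.inr <| Or.inr <| Or.inr ?_
      exact Sym2.eq_swap.trans (pv_pair_congr (by omega) (by omega))
    · refine Or.inr <| Or.inr <| Or.inr <| Or.inr <| Or.inl
        ⟨(i + 1) / 2, by omega, by omega, by omega, ?_⟩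
      exact pv_pair_congr (by omega) (by omega)
    · subst i
      exact Or.inr <| Or.inr <| Or.inr <| Or.inr <| Or.inr <| Or.inl rfl
    · subst i
      exact Or.inr <| Or.inr <| Or.inr <| Or.inr <| Or.inr <| Or.inl Sym2.eq_swap
    · refine Or.inr <| Or.inr <| Or.inr <| Or.inr <| Or.inl
        ⟨(i - 2) / 2, by omega, by omega, by omega, ?_⟩
      exact Sym2.eq_swap.trans (pv_pair_congr (by omega) (by omega))

theorem exists_eq_of_mem_papillonEdges {e : Sym2 (PapVert (2 * (n + n)))}
    (he : e ∈ papillonEdges n n) :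
    ∃ x, e = s(x, spoke x) ∨ e = s(x, twin x) ∨ e = s(x, link n x) := by
  have hn : 1 ≤ n := NeZero.one_le
  simp only [papillonEdges, Nat.min_self] at he
  obtain ⟨i, h₁, h₂, rfl⟩ | rfl | ⟨i, h₁, h₂, rfl⟩ | ⟨i, h₁, h₂, rfl⟩ | ⟨i, h₁, h₂, h₃, rfl⟩ |
    rfl | rfl := he
  · refine ⟨pu _ i, ?_⟩
    rcases Nat.mod_two_eq_zero_or_one i with hi | hi
    · right; right
      rw [link_pu h₁ (by omega), outerLinkIdx, if_neg (by omega), if_neg (by omega)]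
    · right; left
      rw [twin_pu h₁ (by omega), pairIdx, if_pos hi]
  · refine ⟨pu _ (2 * (n + n)), Or.inr <| Or.inr ?_⟩
    rw [link_pu (by omega) le_rfl, outerLinkIdx, if_neg (by omega), if_pos rfl]
  · exact ⟨pu _ i, Or.inl rfl⟩
  · refine ⟨pv _ (2 * i - 1), Or.inr <| Or.inl ?_⟩
    rw [twin_pv (by omega) (by omega), pairIdx, if_pos (by omega)]
    exact pv_pair_congr rfl (by omega)
  · refine ⟨pv _ (2 * i - 1), Or.inr <| Or.inr ?_⟩
    rw [link_pv (by omega) (by omega), innerLinkIdx, if_pos (by omega), if_neg (by omega),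
      if_neg (by omega)]
    exact pv_pair_congr rfl (by omega)
  · refine ⟨pv _ 2, Or.inr <| Or.inr ?_⟩
    rw [link_pv (by omega) (by omega), innerLinkIdx, if_neg (by omega), if_pos rfl]
  · refine ⟨pv _ (2 * n - 1), Or.inr <| Or.inr ?_⟩
    rw [link_pv (by omega) (by omega), innerLinkIdx, if_pos (by omega), if_pos rfl]
    exact pv_pair_congr rfl (by omega)

theorem adj_iff (x y : PapVert (2 * (n + n))) :
    (papillon n n).Adj x y ↔ y = spoke x ∨ y = twin x ∨ y = link n x := by
  rw [papillon, SimpleGraph.fromEdgeSet_adj]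
  constructor
  · rintro ⟨he, -⟩
    obtain ⟨z, h | h | h⟩ := exists_eq_of_mem_papillonEdges he
    exacts [Or.inl (involutive_spoke.eq_apply_of_mk_eq h),
      Or.inr <| Or.inl (involutive_twin.eq_apply_of_mk_eq h),
      Or.inr <| Or.inr (involutive_link.eq_apply_of_mk_eq h)]
  · rintro (rfl | rfl | rfl)
    exacts [⟨spoke_mem_papillonEdges x, (spoke_ne_self x).symm⟩,
      ⟨twin_mem_papillonEdges x, (onIdx_ne_self (fun _ => isPairing_pairIdx _) x).symm⟩,
      ⟨link_mem_papillonEdges x, (onIdx_ne_self (isPairing_linkIdx n) x).symm⟩]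

theorem isSquareDecomposition : IsSquareDecomposition (papillon n n) spoke twin (link n) where
  adj_iff := adj_iff
  involutive_σ := involutive_spoke
  involutive_ι := involutive_twin
  involutive_β := involutive_link
  comm := spoke_twin
  σ_ne_ι := spoke_ne_onIdx _
  σ_ne_β := spoke_ne_onIdx _
  ι_ne_β := twin_ne_link

theorem exists_eq_link_of_mem_Xcut {e : Sym2 (PapVert (2 * (n + n)))} (he : e ∈ Xcut n) :
    ∃ x, e = s(x, link n x) := by
  have hn : 1 ≤ n := NeZero.one_le
  simp only [Xcut, Set.mem_insert_iff, Set.mem_singleton_iff] at he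
  obtain rfl | rfl | rfl | rfl := he
  · refine ⟨pu _ 1, ?_⟩
    rw [link_pu le_rfl (by omega), outerLinkIdx, if_pos rfl, if_pos rfl]
    exact pu_pair_congr rfl (by omega)
  · refine ⟨pv _ (2 * n - 1), ?_⟩
    rw [link_pv (by omega) (by omega), innerLinkIdx, if_pos (by omega), if_pos rfl]
  · refine ⟨pv _ 2, ?_⟩
    rw [link_pv (by omega) (by omega), innerLinkIdx, if_neg (by omega), if_pos rfl]
  · refine ⟨pu _ (2 * n), ?_⟩
    rw [link_pu (by omega) (by omega), outerLinkIdx, if_neg (by omega), if_neg (by omega)]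

theorem ncard_Xcut : (Xcut n).ncard = 4 := by
  have hn : 1 ≤ n := NeZero.one_le
  rw [Xcut, Set.ncard_insert_of_notMem, Set.ncard_insert_of_notMem, Set.ncard_pair]
  all_goals simp (disch := omega) only [Set.mem_insert_iff, Set.mem_singleton_iff, ne_eq,
    Sym2.eq_iff, pu, pv, Prod.mk.injEq, natCast_inj_of_mem_Icc, Bool.false_eq_true,
    Bool.true_eq_false, true_and, false_and, and_false, or_false, false_or, not_false_eq_true]
  all_goals omega

end Papillon

/-- If `M₁` is a perfect matching of the balanced papillon graph `P_n` with
`|M₁ ∩ X| = 2`, where `X` is the principal 4-edge-cut, then there is a perfect matching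
`M₂` of `P_n` with `|M₂ ∩ X| = 2` and `M₁ ∩ M₂ = ∅`. -/
theorem statement12 (n : ℕ) (hn : 1 ≤ n) (M₁ : Set (Sym2 (PapVert (2 * (n + n)))))
    (hM₁ : IsPerfMatching (papillon n n) M₁) (h2 : (M₁ ∩ Xcut n).ncard = 2) :
    ∃ M₂ : Set (Sym2 (PapVert (2 * (n + n)))),
      IsPerfMatching (papillon n n) M₂ ∧ (M₂ ∩ Xcut n).ncard = 2 ∧ M₁ ∩ M₂ = ∅ := by
  have : NeZero n := ⟨by omega⟩
  obtain ⟨M₂, hM₂, hdisj, hlink⟩ := Papillon.isSquareDecomposition.exists_disjoint_perfMatching hM₁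
  have hX : M₂ ∩ Xcut n = Xcut n \ M₁ := by
    ext e
    constructor
    · rintro ⟨he₂, heX⟩
      exact ⟨heX, fun he₁ => Set.disjoint_left.1 hdisj he₁ he₂⟩
    · rintro ⟨heX, he₁⟩
      obtain ⟨x, rfl⟩ := Papillon.exists_eq_link_of_mem_Xcut heX
      exact ⟨hlink x he₁, heX⟩
  refine ⟨M₂, hM₂, ?_, Set.disjoint_iff_inter_eq_empty.1 hdisj⟩
  have hsplit := Set.ncard_inter_add_ncard_sdiff_eq_ncard (Xcut n) M₁
  rw [Set.inter_comm, h2, Papillon.ncard_Xcut] at hsplit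
  rw [hX]
  omega
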